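/- arXiv:math/0703109 — 2 statements merged into one kernel-verified Lean document; each statement's English description precedes it below -/
import Mathlib

section
/- Let g ∈ ℤ[t] be a nonzero polynomial and let g*(t) = t^{deg g} g(1/t) denote its reciprocal polynomial. If δ ∈ ℤ[t] is irreducible, primitive, and symmetric (δ* = ± t^k δ for appropriate normalization, i.e., δ equals its own reciprocal up to sign), then the multiplicity of δ in the product g(t) · g*(t) is even. -/
/-!
Reversal is multiplicative over a domain, and `p.reverse.reverse` is `p` with its powers of `X`
stripped off. Hence a polynomial `δ` associated to its own reverse divides `p.reverse` exactly as
often as it divides `p`, and at a prime `δ` multiplicities add, so the multiplicity of `δ` in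
`g * g.reverse` is twice that in `g`.
-/

open Polynomial

namespace Polynomial

section Semiring

variable {R : Type*} [Semiring R]

theorem reverse_reverse_dvd (p : R[X]) : p.reverse.reverse ∣ p := by
  refine ⟨X ^ p.mirror.natTrailingDegree, ?_⟩
  conv_lhs => rw [← mirror_mirror p]
  rw [mirror, mirror, reverse_mul_X_pow]

variable [NoZeroDivisors R]

theorem reverse_pow (p : R[X]) (n : ℕ) : (p ^ n).reverse = p.reverse ^ n := by
  induction n with
  | zero => simpa using reverse_C (1 : R)
  | succ n ih => rw [pow_succ, reverse_mul_of_domain, ih, pow_succ]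

theorem reverse_dvd_reverse {p q : R[X]} (h : p ∣ q) : p.reverse ∣ q.reverse := by
  obtain ⟨r, rfl⟩ := h
  exact ⟨r.reverse, reverse_mul_of_domain p r⟩

end Semiring

section CommSemiring

variable {R : Type*} [CommSemiring R] [NoZeroDivisors R] {p q : R[X]}

theorem dvd_reverse_iff (hq : Associated q.reverse q) : q ∣ p.reverse ↔ q ∣ p := by
  have hdvd {r : R[X]} (h : q ∣ r) : q ∣ r.reverse := hq.symm.dvd.trans (reverse_dvd_reverse h)
  exact ⟨fun h ↦ (hdvd h).trans (reverse_reverse_dvd p), hdvd⟩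

theorem emultiplicity_reverse (hq : Associated q.reverse q) :
    emultiplicity q p.reverse = emultiplicity q p :=
  emultiplicity_eq_emultiplicity_iff.mpr fun n ↦
    dvd_reverse_iff (by simpa only [reverse_pow] using hq.pow_pow)

theorem multiplicity_reverse (hq : Associated q.reverse q) :
    multiplicity q p.reverse = multiplicity q p :=
  multiplicity_eq_of_emultiplicity_eq (emultiplicity_reverse hq)

end CommSemiring

end Polynomial

theorem stmt_13_general (g δ : ℤ[X]) (hg : g ≠ 0) (hirr : Irreducible δ)
    (hsym : δ.reverse = δ ∨ δ.reverse = -δ) :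
    ∃ k : ℕ, Even k ∧ δ ^ k ∣ g * g.reverse ∧ ¬ δ ^ (k + 1) ∣ g * g.reverse := by
  have hself : Associated δ.reverse δ :=
    hsym.elim (fun h ↦ by rw [h]) (fun h ↦ by rw [h, Associated.neg_left_iff])
  have hfin : FiniteMultiplicity δ (g * g.reverse) :=
    .of_not_isUnit hirr.not_isUnit (mul_ne_zero hg (mt reverse_eq_zero.mp hg))
  refine ⟨multiplicity δ (g * g.reverse), ?_, pow_multiplicity_dvd _ _,
    hfin.not_pow_dvd_of_multiplicity_lt (Nat.lt_succ_self _)⟩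
  rw [multiplicity_mul hirr.prime hfin, multiplicity_reverse hself]
  exact Even.add_self _

theorem stmt_13 (g δ : ℤ[X]) (hg : g ≠ 0) (hirr : Irreducible δ)
    (hprim : δ.IsPrimitive) (hsym : δ.reverse = δ ∨ δ.reverse = -δ) :
    ∃ k : ℕ, Even k ∧ δ ^ k ∣ g * g.reverse ∧ ¬ δ ^ (k + 1) ∣ g * g.reverse :=
  stmt_13_general g δ hg hirr hsym
end

section
/- Suppose f, h ∈ ℤ[t] satisfy f(t) · h(t^2) · Φ_{2p}(t) = g(t) · g*(t) for some g ∈ ℤ[t] with g* its reciprocal polynomial, where p is an odd prime, h(1) = ±1, and Φ_{2p} does not divide f. Then Φ_{2p} divides g·g* to odd total multiplicity on the left side, a contradiction; i.e., no such f, h, g exist with Φ_{2p} ∤ f. Equivalently: if f(t) h(t^2) Φ_{2p}(t) = g(t) g*(t) with h(1) = ±1 and p an odd prime, then Φ_{2p} divides f. -/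
/-!
Evaluating at `-1` shows `Φ_{2p}(-1) = p`, so `Φ_{2p}` divides neither `X` nor `h(X²)`, whose
values at `-1` are units. Since `Φ_{2p}` is prime and palindromic, it occurs in `g` and in its
reversal `g*` with the same multiplicity, so its multiplicity in `g g*` is even. On the left it
occurs exactly once, unless it divides `f`.
-/

open Polynomial

namespace Polynomial

section Semiring

variable {R : Type*} [Semiring R]

lemma reverse_X_pow_add_one [Nontrivial R] (n : ℕ) : (X ^ n + 1 : R[X]).reverse = X ^ n + 1 := by
  have hXn : (X ^ n : R[X]).reverse = 1 := by
    rw [← mul_one (X ^ n : R[X]), reverse_X_pow_mul, ← C_1, reverse_C]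
  simpa [hXn, add_comm] using reverse_add_C (X ^ n : R[X]) 1

variable [NoZeroDivisors R] {q g : R[X]}

lemma mirror_pow (q : R[X]) (n : ℕ) : (q ^ n).mirror = q.mirror ^ n := by
  induction n with
  | zero => simpa using mirror_C (1 : R)
  | succ n ih => rw [pow_succ, mirror_mul_of_domain, ih, pow_succ]

lemma dvd_mirror_of_dvd (hq : q.mirror = q) (h : q ∣ g) : q ∣ g.mirror := by
  obtain ⟨r, rfl⟩ := h
  rw [mirror_mul_of_domain, hq]
  exact dvd_mul_right _ _

lemma emultiplicity_mirror (hq : q.mirror = q) :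
    emultiplicity q g.mirror = emultiplicity q g := by
  have hqn (n : ℕ) : (q ^ n).mirror = q ^ n := by rw [mirror_pow, hq]
  refine le_antisymm (emultiplicity_le_emultiplicity_iff.mpr fun n h => ?_)
    (emultiplicity_le_emultiplicity_iff.mpr fun n => dvd_mirror_of_dvd (hqn n))
  simpa only [mirror_mirror] using dvd_mirror_of_dvd (hqn n) h

end Semiring

section Domain

variable {R : Type*} [CommRing R] [IsDomain R] {q g : R[X]}
  (hq : Prime q) (hmirror : q.mirror = q) (hX : ¬q ∣ X)
include hq hmirror hX

lemma emultiplicity_reverse_s15 : emultiplicity q g.reverse = emultiplicity q g := by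
  have hXpow : emultiplicity q (X ^ g.natTrailingDegree) = 0 :=
    emultiplicity_eq_zero.mpr fun h => hX (hq.dvd_of_dvd_pow h)
  rw [← emultiplicity_mirror (g := g) hmirror, mirror, emultiplicity_mul hq, hXpow, add_zero]

lemma emultiplicity_mul_reverse :
    emultiplicity q (g * g.reverse) = emultiplicity q g + emultiplicity q g := by
  rw [emultiplicity_mul hq, emultiplicity_reverse_s15 hq hmirror hX]

end Domain

section CyclotomicTwoMul

variable {p : ℕ} (hp : p.Prime) (hodd : Odd p)
include hp hodd

lemma eval_neg_one_cyclotomic_prime : (cyclotomic p ℤ).eval (-1) = 1 := by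
  have := congrArg (eval (-1)) (cyclotomic_prime_mul_X_sub_one ℤ p (hn := ⟨hp⟩))
  simp only [eval_mul, eval_sub, eval_X, eval_one, eval_pow, hodd.neg_one_pow] at this
  linarith

lemma eval_neg_one_cyclotomic_two_mul : (cyclotomic (2 * p) ℤ).eval (-1) = p := by
  have := congrArg (eval (-1))
    (cyclotomic_expand_eq_cyclotomic_mul Nat.prime_two hodd.not_two_dvd_nat ℤ)
  rw [expand_eval, eval_mul, eval_neg_one_cyclotomic_prime hp hodd, mul_one] at this
  simpa [mul_comm p 2, eval_one_cyclotomic_prime (hn := ⟨hp⟩)] using this.symm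

lemma cyclotomic_two_mul_not_dvd_of_isUnit_eval {a : ℤ[X]} (ha : IsUnit (a.eval (-1))) :
    ¬cyclotomic (2 * p) ℤ ∣ a := fun hdvd => by
  have hpa := eval_dvd (x := -1) hdvd
  rw [eval_neg_one_cyclotomic_two_mul hp hodd] at hpa
  exact hp.not_dvd_one (by exact_mod_cast hpa.trans (isUnit_iff_dvd_one.mp ha))

lemma cyclotomic_two_mul_mul_X_add_one : cyclotomic (2 * p) ℤ * (X + 1) = X ^ p + 1 := by
  have hΦp := cyclotomic_prime_mul_X_sub_one ℤ p (hn := ⟨hp⟩)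
  have hexp := congrArg (expand ℤ 2) hΦp
  rw [map_mul, cyclotomic_expand_eq_cyclotomic_mul Nat.prime_two hodd.not_two_dvd_nat,
    mul_comm p 2] at hexp
  simp only [map_sub, map_pow, map_one, expand_X] at hexp
  have hne : (X ^ p - 1 : ℤ[X]) ≠ 0 := by simpa using X_pow_sub_C_ne_zero hp.pos (1 : ℤ)
  apply mul_right_cancel₀ hne
  linear_combination (-(cyclotomic (2 * p) ℤ * (X + 1))) * hΦp + hexp

lemma mirror_cyclotomic_two_mul : (cyclotomic (2 * p) ℤ).mirror = cyclotomic (2 * p) ℤ := by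
  have hrev := congrArg reverse (cyclotomic_two_mul_mul_X_add_one hp hodd)
  have hX1 : (X + 1 : ℤ[X]).reverse = X + 1 := by simpa using reverse_X_pow_add_one (R := ℤ) 1
  rw [reverse_mul_of_domain, hX1, reverse_X_pow_add_one,
    ← cyclotomic_two_mul_mul_X_add_one hp hodd] at hrev
  have htrailing : (cyclotomic (2 * p) ℤ).natTrailingDegree = 0 :=
    natTrailingDegree_eq_zero.mpr
      (Or.inr (by rw [cyclotomic_coeff_zero ℤ (by linarith [hp.two_le])]; exact one_ne_zero))
  rw [mirror, htrailing, pow_zero, mul_one, mul_right_cancel₀ (X_add_C_ne_zero 1) hrev]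

end CyclotomicTwoMul

end Polynomial

theorem stmt_15 (p : ℕ) (hp : p.Prime) (hodd : Odd p) (f h g : ℤ[X])
    (hh : h.eval 1 = 1 ∨ h.eval 1 = -1)
    (heq : f * h.comp (X ^ 2) * cyclotomic (2 * p) ℤ = g * g.reverse) :
    cyclotomic (2 * p) ℤ ∣ f := by
  by_contra hf
  set Φ := cyclotomic (2 * p) ℤ
  have hΦ : Prime Φ := (cyclotomic.irreducible (mul_pos two_pos hp.pos)).prime
  have hX : ¬Φ ∣ X := cyclotomic_two_mul_not_dvd_of_isUnit_eval hp hodd (by simp)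
  have hh2 : ¬Φ ∣ h.comp (X ^ 2) :=
    cyclotomic_two_mul_not_dvd_of_isUnit_eval hp hodd (by simpa using Int.isUnit_iff.mpr hh)
  have hself : emultiplicity Φ Φ = 1 := by simpa using emultiplicity_pow_self_of_prime hΦ 1
  have hmult := congrArg (emultiplicity Φ) heq
  rw [emultiplicity_mul_reverse hΦ (mirror_cyclotomic_two_mul hp hodd) hX, emultiplicity_mul hΦ,
    emultiplicity_mul hΦ, emultiplicity_eq_zero.mpr hf, emultiplicity_eq_zero.mpr hh2,
    zero_add, zero_add, hself] at hmult
  generalize emultiplicity Φ g = m at hmult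
  induction m using ENat.recTopCoe with
  | top => simp at hmult
  | coe m => norm_cast at hmult; omega
end
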